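/- Forced field-to-fluid correspondence (flat-target instance): let κ ≥ 0, let φ = (φ₁,φ₂) : ℝ³ → ℝ² be a C² map and P̄ : ℝ² → ℝ a C¹ function, and suppose φ is σ_{1,2}-critical with potential P̄, i.e. κ·Δφₐ(x) + τ_{σ₂}(φ)ₐ(x) = (∂ₐP̄)(φ(x)) for a = 1,2 and all x ∈ ℝ³. Then V = ∇φ₁ × ∇φ₂ satisfies the steady forced Euler equations (V·∇)V = −∇p + F and div V = 0 on ℝ³, where p = P̄∘φ − ½|V|² and F is the vector field Fᵢ = κ(Σⱼ ∂ⱼCᵢⱼ − ½ ∂ᵢ|Dφ|²); moreover ⟨F(x), V(x)⟩ = 0 for all x. -/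

import Mathlib

open scoped BigOperators

/-- Partial derivative `∂ⱼ f` of a scalar function on `ℝ³`. -/
noncomputable def pd (j : Fin 3) (f : (Fin 3 → ℝ) → ℝ) (x : Fin 3 → ℝ) : ℝ :=
  fderiv ℝ f x (Pi.single j 1)

/-- Cross product on `ℝ³`. -/
def cross (a b : Fin 3 → ℝ) : Fin 3 → ℝ :=
  ![a 1 * b 2 - a 2 * b 1, a 2 * b 0 - a 0 * b 2, a 0 * b 1 - a 1 * b 0]

/-- Cauchy–Green tensor `Cᵢⱼ = Σₐ ∂ᵢφₐ ∂ⱼφₐ` of a map `φ : ℝ³ → ℝ²`. -/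
noncomputable def CG (φ : Fin 2 → (Fin 3 → ℝ) → ℝ) (i j : Fin 3) (x : Fin 3 → ℝ) : ℝ :=
  ∑ a : Fin 2, pd i (φ a) x * pd j (φ a) x

/-- `|Dφ|² = Σ_{a,i} (∂ᵢφₐ)²`. -/
noncomputable def eDen (φ : Fin 2 → (Fin 3 → ℝ) → ℝ) (x : Fin 3 → ℝ) : ℝ :=
  ∑ a : Fin 2, ∑ i : Fin 3, (pd i (φ a) x) ^ 2

/-- σ₂-tension field `τ_{σ₂}(φ)ₐ = Σⱼ ∂ⱼ(|Dφ|² ∂ⱼφₐ − Σᵢ Cᵢⱼ ∂ᵢφₐ)`. -/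
noncomputable def tau2 (φ : Fin 2 → (Fin 3 → ℝ) → ℝ) (a : Fin 2) (x : Fin 3 → ℝ) : ℝ :=
  ∑ j : Fin 3,
    pd j (fun y => eDen φ y * pd j (φ a) y - ∑ i : Fin 3, CG φ i j y * pd i (φ a) y) x

/-- Laplacian of a scalar function on `ℝ³`. -/
noncomputable def lap (f : (Fin 3 → ℝ) → ℝ) (x : Fin 3 → ℝ) : ℝ :=
  ∑ j : Fin 3, pd j (fun y => pd j f y) x

/-- Fluid velocity `V = ∇φ₁ × ∇φ₂` associated to `φ`. -/
noncomputable def Vfield (φ : Fin 2 → (Fin 3 → ℝ) → ℝ) (x : Fin 3 → ℝ) : Fin 3 → ℝ :=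
  cross (fun i => pd i (φ 0) x) (fun i => pd i (φ 1) x)

/-! By the chain rule, the Euler–Lagrange equation gives `∇(P̄∘φ) = Σₐ (κΔφₐ + τₐ) ∇φₐ`.
The harmonic part `Σₐ Δφₐ ∇φₐ` is the divergence of the stress `C − ½|Dφ|² I`, so that
`F = κ Σₐ Δφₐ ∇φₐ`, which is orthogonal to `V` because each `∇φₐ` is. For the σ₂ part, the flux
whose divergence is `τ₁` is `∇φ₂ × V` and the one for `τ₂` is `V × ∇φ₁`; as `curl ∇ = 0` this
gives `τ₁ = -∇φ₂ · curl V`, `τ₂ = ∇φ₁ · curl V`, hence `Σₐ τₐ ∇φₐ = V × curl V = ½∇|V|² − (V·∇)V`.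
Finally `div V = 0` since `V` is a cross product of gradients. -/

open Matrix

section PartialDerivatives

variable {f g : (Fin 3 → ℝ) → ℝ} {x : Fin 3 → ℝ} {j : Fin 3}

theorem pd_sub (hf : DifferentiableAt ℝ f x) (hg : DifferentiableAt ℝ g x) :
    pd j (fun y => f y - g y) x = pd j f x - pd j g x := by
  simp [pd, fderiv_fun_sub hf hg]

theorem pd_mul (hf : DifferentiableAt ℝ f x) (hg : DifferentiableAt ℝ g x) :
    pd j (fun y => f y * g y) x = pd j f x * g x + f x * pd j g x := by
  simp only [pd, fderiv_fun_mul hf hg, _root_.add_apply, _root_.smul_apply, smul_eq_mul]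
  ring

theorem pd_const_mul (c : ℝ) (hf : DifferentiableAt ℝ f x) :
    pd j (fun y => c * f y) x = c * pd j f x := by
  simp [pd, fderiv_const_mul hf c]

theorem pd_sq (hf : DifferentiableAt ℝ f x) :
    pd j (fun y => f y ^ 2) x = 2 * f x * pd j f x := by
  simp only [sq, pd_mul hf hf]
  ring

theorem pd_sum {ι : Type*} (s : Finset ι) {f : ι → (Fin 3 → ℝ) → ℝ}
    (hf : ∀ a ∈ s, DifferentiableAt ℝ (f a) x) :
    pd j (fun y => ∑ a ∈ s, f a y) x = ∑ a ∈ s, pd j (f a) x := by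
  simp [pd, fderiv_fun_sum hf]

theorem pd_comp_pi {ι : Type*} [Fintype ι] [DecidableEq ι] {φ : ι → (Fin 3 → ℝ) → ℝ}
    {P : (ι → ℝ) → ℝ} (hP : DifferentiableAt ℝ P (fun b => φ b x))
    (hφ : ∀ b, DifferentiableAt ℝ (φ b) x) :
    pd j (fun y => P (fun b => φ b y)) x
      = ∑ b, fderiv ℝ P (fun b => φ b x) (Pi.single b 1) * pd j (φ b) x := by
  have hΦ : DifferentiableAt ℝ (fun y b => φ b y) x := differentiableAt_pi.2 hφ
  have hgrad :
      fderiv ℝ (fun y b => φ b y) x (Pi.single j 1) = ∑ b, pd j (φ b) x • Pi.single b 1 := by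
    rw [fderiv_pi hφ]
    simp_rw [← Pi.single_smul, smul_eq_mul, mul_one]
    exact (Finset.univ_sum_single _).symm
  simp only [pd]
  rw [show (fun y => P (fun b => φ b y)) = P ∘ fun y b => φ b y from rfl, fderiv_comp x hP hΦ,
    ContinuousLinearMap.comp_apply, hgrad, map_sum]
  refine Finset.sum_congr rfl fun b _ => ?_
  rw [map_smul, smul_eq_mul, mul_comm]
  rfl

theorem differentiable_pd (hf : ContDiff ℝ 2 f) (i : Fin 3) : Differentiable ℝ (pd i f) :=
  ((hf.fderiv_right (m := 1) (by norm_num)).clm_apply contDiff_const).differentiable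
    (by norm_num)

theorem pd_pd_comm (hf : ContDiff ℝ 2 f) (i j : Fin 3) (x : Fin 3 → ℝ) :
    pd i (pd j f) x = pd j (pd i f) x := by
  have hsymm := (hf.contDiffAt (x := x)).isSymmSndFDerivAt
    (by simp [minSmoothness_of_isRCLikeNormedField])
  have hd : DifferentiableAt ℝ (fderiv ℝ f) x :=
    (hf.fderiv_right (m := 1) (by norm_num)).differentiable (by norm_num) x
  have hsnd : ∀ u v : Fin 3 → ℝ,
      fderiv ℝ (fun y => fderiv ℝ f y v) x u = fderiv ℝ (fderiv ℝ f) x u v := by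
    intro u v
    simp [fderiv_clm_apply hd (differentiableAt_const v)]
  change fderiv ℝ (fun y => fderiv ℝ f y (Pi.single j 1)) x (Pi.single i 1)
    = fderiv ℝ (fun y => fderiv ℝ f y (Pi.single i 1)) x (Pi.single j 1)
  rw [hsnd, hsnd, hsymm]

end PartialDerivatives

section VectorCalculus

noncomputable def grad (f : (Fin 3 → ℝ) → ℝ) (x : Fin 3 → ℝ) : Fin 3 → ℝ := fun i => pd i f x

noncomputable def divergence (V : (Fin 3 → ℝ) → Fin 3 → ℝ) (x : Fin 3 → ℝ) : ℝ :=
  ∑ i, pd i (fun y => V y i) x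

noncomputable def curl (V : (Fin 3 → ℝ) → Fin 3 → ℝ) (x : Fin 3 → ℝ) : Fin 3 → ℝ :=
  ![pd 1 (fun y => V y 2) x - pd 2 (fun y => V y 1) x,
    pd 2 (fun y => V y 0) x - pd 0 (fun y => V y 2) x,
    pd 0 (fun y => V y 1) x - pd 1 (fun y => V y 0) x]

variable {f : (Fin 3 → ℝ) → ℝ} {V a b : (Fin 3 → ℝ) → Fin 3 → ℝ} {x : Fin 3 → ℝ}

theorem curl_grad (hf : ContDiff ℝ 2 f) (x : Fin 3 → ℝ) : curl (grad f) x = 0 := by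
  simp only [curl, grad, pd_pd_comm hf 1 2, pd_pd_comm hf 2 0, pd_pd_comm hf 0 1, sub_self]
  ext i
  fin_cases i <;> rfl

theorem divergence_cross (ha : ∀ i, DifferentiableAt ℝ (fun y => a y i) x)
    (hb : ∀ i, DifferentiableAt ℝ (fun y => b y i) x) :
    divergence (fun y => a y ⨯₃ b y) x = curl a x ⬝ᵥ b x - a x ⬝ᵥ curl b x := by
  simp only [divergence, curl, cross_apply, vec3_dotProduct, Fin.sum_univ_three,
    cons_val_zero, cons_val_one, cons_val_two, head_cons, tail_cons]
  simp (disch := fun_prop) only [pd_sub, pd_mul]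
  ring

theorem sum_mul_pd_eq_half_pd_sq_sub_cross_curl
    (hV : ∀ i, DifferentiableAt ℝ (fun y => V y i) x) (i : Fin 3) :
    ∑ j, V x j * pd j (fun y => V y i) x
      = 1 / 2 * pd i (fun y => ∑ k, V y k ^ 2) x - (V x ⨯₃ curl V x) i := by
  rw [pd_sum (f := fun k y => V y k ^ 2) _ fun k _ => (hV k).pow 2]
  simp only [pd_sq (hV _), curl, cross_apply, Fin.sum_univ_three]
  fin_cases i <;>
    simp only [Fin.zero_eta, Fin.mk_one, Fin.reduceFinMk, cons_val, cons_val_one, cons_val_zero] <;>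
    ring

theorem lap_mul_pd_eq (hf : ContDiff ℝ 2 f) (i : Fin 3) (x : Fin 3 → ℝ) :
    lap f x * pd i f x
      = ∑ j, pd j (fun y => pd i f y * pd j f y) x
        - 1 / 2 * pd i (fun y => ∑ j, pd j f y ^ 2) x := by
  have hd j : DifferentiableAt ℝ (pd j f) x := (differentiable_pd hf j).differentiableAt
  rw [pd_sum (f := fun j y => pd j f y ^ 2) _ fun j _ => (hd j).pow 2]
  simp_rw [pd_mul (hd i) (hd _), pd_sq (hd _), pd_pd_comm hf i]
  simp only [lap, Fin.sum_univ_three]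
  ring

end VectorCalculus

section FaddeevSkyrme

variable {φ : Fin 2 → (Fin 3 → ℝ) → ℝ}

theorem Vfield_eq_cross (φ : Fin 2 → (Fin 3 → ℝ) → ℝ) (x : Fin 3 → ℝ) :
    Vfield φ x = grad (φ 0) x ⨯₃ grad (φ 1) x :=
  rfl

theorem differentiable_Vfield_apply (hφ : ∀ a, ContDiff ℝ 2 (φ a)) (i : Fin 3) :
    Differentiable ℝ (fun y => Vfield φ y i) := by
  have hd a j := differentiable_pd (hφ a) j
  fin_cases i <;>
    simp only [Vfield, cross, Fin.zero_eta, Fin.mk_one, Fin.reduceFinMk, cons_val, cons_val_one,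
      cons_val_zero] <;>
    fun_prop

theorem grad_dotProduct_Vfield (φ : Fin 2 → (Fin 3 → ℝ) → ℝ) (a : Fin 2) (x : Fin 3 → ℝ) :
    grad (φ a) x ⬝ᵥ Vfield φ x = 0 := by
  fin_cases a <;> simp [Vfield_eq_cross, dot_self_cross, dot_cross_self]

theorem divergence_Vfield (hφ : ∀ a, ContDiff ℝ 2 (φ a)) (x : Fin 3 → ℝ) :
    divergence (Vfield φ) x = 0 := by
  rw [funext (Vfield_eq_cross φ),
    divergence_cross (a := grad (φ 0)) (b := grad (φ 1))
      (fun i => (differentiable_pd (hφ 0) i).differentiableAt)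
      (fun i => (differentiable_pd (hφ 1) i).differentiableAt),
    curl_grad (hφ 0), curl_grad (hφ 1), zero_dotProduct, dotProduct_zero, sub_zero]

noncomputable def sigma2Stress (φ : Fin 2 → (Fin 3 → ℝ) → ℝ) (a : Fin 2) (y : Fin 3 → ℝ) :
    Fin 3 → ℝ :=
  fun j => eDen φ y * pd j (φ a) y - ∑ i, CG φ i j y * pd i (φ a) y

theorem tau2_eq_divergence_sigma2Stress (φ : Fin 2 → (Fin 3 → ℝ) → ℝ) (a : Fin 2)
    (x : Fin 3 → ℝ) : tau2 φ a x = divergence (sigma2Stress φ a) x :=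
  rfl

theorem sigma2Stress_zero (φ : Fin 2 → (Fin 3 → ℝ) → ℝ) :
    sigma2Stress φ 0 = fun y => grad (φ 1) y ⨯₃ Vfield φ y := by
  ext y j
  simp only [sigma2Stress, eDen, CG, Vfield_eq_cross, cross_cross_eq_smul_sub_smul', dotProduct,
    grad, Fin.sum_univ_two, Fin.sum_univ_three, Pi.sub_apply, Pi.smul_apply, smul_eq_mul]
  ring

theorem sigma2Stress_one (φ : Fin 2 → (Fin 3 → ℝ) → ℝ) :
    sigma2Stress φ 1 = fun y => Vfield φ y ⨯₃ grad (φ 0) y := by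
  ext y j
  simp only [sigma2Stress, eDen, CG, Vfield_eq_cross, cross_cross_eq_smul_sub_smul, dotProduct,
    grad, Fin.sum_univ_two, Fin.sum_univ_three, Pi.sub_apply, Pi.smul_apply, smul_eq_mul]
  ring

theorem tau2_zero (hφ : ∀ a, ContDiff ℝ 2 (φ a)) (x : Fin 3 → ℝ) :
    tau2 φ 0 x = -(grad (φ 1) x ⬝ᵥ curl (Vfield φ) x) := by
  rw [tau2_eq_divergence_sigma2Stress, sigma2Stress_zero,
    divergence_cross (a := grad (φ 1))
      (fun i => (differentiable_pd (hφ 1) i).differentiableAt)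
      (fun i => (differentiable_Vfield_apply hφ i).differentiableAt),
    curl_grad (hφ 1), zero_dotProduct, zero_sub]

theorem tau2_one (hφ : ∀ a, ContDiff ℝ 2 (φ a)) (x : Fin 3 → ℝ) :
    tau2 φ 1 x = grad (φ 0) x ⬝ᵥ curl (Vfield φ) x := by
  rw [tau2_eq_divergence_sigma2Stress, sigma2Stress_one,
    divergence_cross (b := grad (φ 0))
      (fun i => (differentiable_Vfield_apply hφ i).differentiableAt)
      (fun i => (differentiable_pd (hφ 0) i).differentiableAt),
    curl_grad (hφ 0), dotProduct_zero, sub_zero, dotProduct_comm]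

theorem sum_tau2_mul_pd_eq (hφ : ∀ a, ContDiff ℝ 2 (φ a)) (i : Fin 3) (x : Fin 3 → ℝ) :
    ∑ a, tau2 φ a x * pd i (φ a) x = (Vfield φ x ⨯₃ curl (Vfield φ) x) i := by
  rw [Fin.sum_univ_two, tau2_zero hφ, tau2_one hφ, Vfield_eq_cross,
    cross_cross_eq_smul_sub_smul]
  simp only [grad, Pi.sub_apply, Pi.smul_apply, smul_eq_mul, dotProduct_comm]
  ring

theorem sum_lap_mul_pd_eq (hφ : ∀ a, ContDiff ℝ 2 (φ a)) (i : Fin 3) (x : Fin 3 → ℝ) :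
    ∑ a, lap (φ a) x * pd i (φ a) x
      = ∑ j, pd j (fun y => CG φ i j y) x - 1 / 2 * pd i (fun y => eDen φ y) x := by
  have hd a j : Differentiable ℝ (pd j (φ a)) := differentiable_pd (hφ a) j
  have hCG j :
      pd j (fun y => CG φ i j y) x = ∑ a, pd j (fun y => pd i (φ a) y * pd j (φ a) y) x :=
    pd_sum (f := fun a y => pd i (φ a) y * pd j (φ a) y) _ fun a _ => by fun_prop
  have heDen : pd i (fun y => eDen φ y) x = ∑ a, pd i (fun y => ∑ j, pd j (φ a) y ^ 2) x :=
    pd_sum (f := fun a y => ∑ j, pd j (φ a) y ^ 2) _ fun a _ => by fun_prop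
  simp only [hCG, heDen, lap_mul_pd_eq (hφ _) i x]
  rw [Finset.sum_comm, Finset.mul_sum, ← Finset.sum_sub_distrib]

end FaddeevSkyrme

theorem stmt10_general (κ : ℝ)
    (φ : Fin 2 → (Fin 3 → ℝ) → ℝ) (hφ : ∀ a, ContDiff ℝ 2 (φ a))
    (Pbar : (Fin 2 → ℝ) → ℝ) (hPbar : ContDiff ℝ 1 Pbar)
    (hcrit : ∀ (a : Fin 2) (x : Fin 3 → ℝ),
      κ * lap (φ a) x + tau2 φ a x = fderiv ℝ Pbar (fun b => φ b x) (Pi.single a 1))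
    (p : (Fin 3 → ℝ) → ℝ)
    (hp : p = fun x => Pbar (fun b => φ b x) - (1/2) * ∑ i, (Vfield φ x i) ^ 2)
    (F : Fin 3 → (Fin 3 → ℝ) → ℝ)
    (hF : ∀ i x, F i x
      = κ * ((∑ j : Fin 3, pd j (fun y => CG φ i j y) x) - (1/2) * pd i (fun y => eDen φ y) x)) :
    (∀ x i, (∑ j, Vfield φ x j * pd j (fun y => Vfield φ y i) x) = - pd i p x + F i x) ∧
    (∀ x, (∑ i, pd i (fun y => Vfield φ y i) x) = 0) ∧
    (∀ x, (∑ i, F i x * Vfield φ x i) = 0) := by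
  have hForce i x : F i x = κ * ∑ a, lap (φ a) x * pd i (φ a) x := by
    rw [hF, sum_lap_mul_pd_eq hφ]
  refine ⟨fun x i => ?_, divergence_Vfield hφ, fun x => ?_⟩
  · have hdφ a : Differentiable ℝ (φ a) := (hφ a).differentiable (by norm_num)
    have hdP : Differentiable ℝ Pbar := hPbar.differentiable (by norm_num)
    have hV k := differentiable_Vfield_apply hφ k
    have hPφ : pd i (fun y => Pbar (fun b => φ b y)) x
        = ∑ a, (κ * lap (φ a) x + tau2 φ a x) * pd i (φ a) x := by
      simp only [pd_comp_pi (hdP _) fun b => hdφ b x, hcrit]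
    rw [hp, pd_sub (by fun_prop) (by fun_prop), pd_const_mul _ (by fun_prop), hPφ, hForce,
      sum_mul_pd_eq_half_pd_sq_sub_cross_curl fun k => hV k x, ← sum_tau2_mul_pd_eq hφ]
    simp only [add_mul, Finset.sum_add_distrib, Finset.mul_sum, mul_assoc]
    ring
  · calc ∑ i, F i x * Vfield φ x i
        = κ * ∑ a, lap (φ a) x * (grad (φ a) x ⬝ᵥ Vfield φ x) := by
          simp only [hForce, dotProduct, grad, Finset.mul_sum, Finset.sum_mul, mul_assoc]
          exact Finset.sum_comm
      _ = 0 := by simp [grad_dotProduct_Vfield]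

/-- if `φ : ℝ³ → ℝ²` is `C²` and σ_{1,2}-critical with potential `P̄`
(`κΔφ + τ_{σ₂}(φ) = (∇P̄)∘φ`, `κ ≥ 0`), then `V = ∇φ₁ × ∇φ₂` satisfies the steady forced
Euler equations `(V·∇)V = -∇p + F`, `div V = 0`, with `p = P̄∘φ − ½|V|²` and
`Fᵢ = κ(Σⱼ ∂ⱼCᵢⱼ − ½∂ᵢ|Dφ|²)`; moreover `⟨F, V⟩ = 0` pointwise. -/
theorem stmt10 (κ : ℝ) (hκ : 0 ≤ κ)
    (φ : Fin 2 → (Fin 3 → ℝ) → ℝ) (hφ : ∀ a, ContDiff ℝ 2 (φ a))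
    (Pbar : (Fin 2 → ℝ) → ℝ) (hPbar : ContDiff ℝ 1 Pbar)
    (hcrit : ∀ (a : Fin 2) (x : Fin 3 → ℝ),
      κ * lap (φ a) x + tau2 φ a x = fderiv ℝ Pbar (fun b => φ b x) (Pi.single a 1))
    (p : (Fin 3 → ℝ) → ℝ)
    (hp : p = fun x => Pbar (fun b => φ b x) - (1/2) * ∑ i, (Vfield φ x i) ^ 2)
    (F : Fin 3 → (Fin 3 → ℝ) → ℝ)
    (hF : ∀ i x, F i x
      = κ * ((∑ j : Fin 3, pd j (fun y => CG φ i j y) x) - (1/2) * pd i (fun y => eDen φ y) x)) :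
    (∀ x i, (∑ j, Vfield φ x j * pd j (fun y => Vfield φ y i) x) = - pd i p x + F i x) ∧
    (∀ x, (∑ i, pd i (fun y => Vfield φ y i) x) = 0) ∧
    (∀ x, (∑ i, F i x * Vfield φ x i) = 0) :=
  stmt10_general κ φ hφ Pbar hPbar hcrit p hp F hF
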